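/- Let x ↦ Λ(x) ∈ ℂ² ⊗ H be a differentiable family of unit vectors with D_x Λ(x) = 0 for x on a surface parametrized by coordinates (s¹,s²), D_x = Σ_i σ_i ⊗ (Xⁱ − xⁱ). Then the symmetrized quantity (1/2)(⟨∂_a Λ, D_x² ∂_b Λ⟩ + ⟨∂_b Λ, D_x² ∂_a Λ⟩) equals the induced Euclidean metric γ_{ab} = Σ_i (∂xⁱ/∂s^a)(∂xⁱ/∂s^b). -/

import Mathlib

/-!
Differentiating `D_{x(s)} Λ(s) = 0` along a coordinate line gives `D ∂ₐΛ = (σ·∂ₐx) Λ`: the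
`x`-dependence of `D` is the term `-(σ·x) ⊗ 1`. Since `D` is self-adjoint,
`⟨∂ₐΛ, D² ∂_bΛ⟩ = ⟨(σ·∂ₐx) Λ, (σ·∂_bx) Λ⟩ = ⟨Λ, (σ·∂ₐx)(σ·∂_bx) Λ⟩`, and symmetrizing in `a, b`
replaces the product by the anticommutator `{σ·u, σ·v} = 2 (u·v)`, leaving `γ_ab ‖Λ‖² = γ_ab`.
-/

open Matrix

noncomputable section

def pauli : Fin 3 → Matrix (Fin 2) (Fin 2) ℂ :=
  ![!![0, 1; 1, 0], !![0, -Complex.I; Complex.I, 0], !![1, 0; 0, -1]]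

variable {H : Type*} [NormedAddCommGroup H] [InnerProductSpace ℂ H] [CompleteSpace H]

def kron (σ : Matrix (Fin 2) (Fin 2) ℂ) (T : H →L[ℂ] H) :
    Matrix (Fin 2) (Fin 2) (H →L[ℂ] H) :=
  Matrix.of fun j k => σ j k • T

def mapp (M : Matrix (Fin 2) (Fin 2) (H →L[ℂ] H)) (v : PiLp 2 fun _ : Fin 2 => H) :
    PiLp 2 fun _ : Fin 2 => H :=
  WithLp.toLp 2 (fun j => ∑ k, M j k (v k))

end

lemma pauli_isHermitian (i : Fin 3) : (pauli i).IsHermitian := by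
  fin_cases i <;> ext j k <;> fin_cases j <;> fin_cases k <;>
    simp [pauli, Matrix.conjTranspose_apply]

def pauliDot (u : Fin 3 → ℝ) : Matrix (Fin 2) (Fin 2) ℂ :=
  ∑ i, (u i : ℂ) • pauli i

lemma pauliDot_eq (u : Fin 3 → ℝ) :
    pauliDot u = !![(u 2 : ℂ), u 0 - Complex.I * u 1; u 0 + Complex.I * u 1, -u 2] := by
  ext j k; fin_cases j <;> fin_cases k <;>
    simp [pauliDot, pauli, Fin.sum_univ_three] <;> ring

lemma pauliDot_isHermitian (u : Fin 3 → ℝ) : (pauliDot u).IsHermitian :=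
  isSelfAdjoint_sum _ fun i _ => (pauli_isHermitian i).smul (Complex.conj_ofReal (u i))

lemma pauliDot_mul_add_mul (u v : Fin 3 → ℝ) :
    pauliDot u * pauliDot v + pauliDot v * pauliDot u
      = ((2 * ∑ i, u i * v i : ℝ) : ℂ) • (1 : Matrix (Fin 2) (Fin 2) ℂ) := by
  rw [pauliDot_eq, pauliDot_eq]
  ext j k; fin_cases j <;> fin_cases k <;> simp [Fin.sum_univ_three] <;> ring_nf <;>
    simp [Complex.I_sq]

section BlockOperators

variable {H : Type*} [NormedAddCommGroup H] [InnerProductSpace ℂ H]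

lemma kron_add_left (σ τ : Matrix (Fin 2) (Fin 2) ℂ) (T : H →L[ℂ] H) :
    kron (σ + τ) T = kron σ T + kron τ T := by
  ext1 j k; simp [kron, add_smul]

lemma kron_smul_left (c : ℂ) (σ : Matrix (Fin 2) (Fin 2) ℂ) (T : H →L[ℂ] H) :
    kron (c • σ) T = c • kron σ T := by
  ext1 j k; simp [kron, smul_smul]

lemma kron_sum_left {ι : Type*} (s : Finset ι) (σ : ι → Matrix (Fin 2) (Fin 2) ℂ)
    (T : H →L[ℂ] H) : kron (∑ i ∈ s, σ i) T = ∑ i ∈ s, kron (σ i) T := by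
  ext1 j k; simp [kron, Matrix.sum_apply, Finset.sum_smul]

lemma kron_mul_kron (σ τ : Matrix (Fin 2) (Fin 2) ℂ) (S T : H →L[ℂ] H) :
    kron σ S * kron τ T = kron (σ * τ) (S * T) := by
  ext1 j k; simp [kron, Matrix.mul_apply, smul_smul, mul_comm, add_smul]

lemma mapp_add (M N : Matrix (Fin 2) (Fin 2) (H →L[ℂ] H)) (v : PiLp 2 fun _ : Fin 2 => H) :
    mapp (M + N) v = mapp M v + mapp N v := by
  ext j; simp [mapp, Finset.sum_add_distrib]

lemma mapp_smul (c : ℂ) (M : Matrix (Fin 2) (Fin 2) (H →L[ℂ] H))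
    (v : PiLp 2 fun _ : Fin 2 => H) : mapp (c • M) v = c • mapp M v := by
  ext j; simp [mapp]

lemma mapp_sum {ι : Type*} (s : Finset ι) (M : ι → Matrix (Fin 2) (Fin 2) (H →L[ℂ] H))
    (v : PiLp 2 fun _ : Fin 2 => H) : mapp (∑ i ∈ s, M i) v = ∑ i ∈ s, mapp (M i) v := by
  ext j; simp [mapp, Matrix.sum_apply, Finset.sum_add_distrib]

lemma mapp_mul (M N : Matrix (Fin 2) (Fin 2) (H →L[ℂ] H)) (v : PiLp 2 fun _ : Fin 2 => H) :
    mapp (M * N) v = mapp M (mapp N v) := by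
  ext j; simp [mapp, Matrix.mul_apply]
  abel

lemma mapp_kron_one_one (v : PiLp 2 fun _ : Fin 2 => H) : mapp (kron 1 1) v = v := by
  ext j; fin_cases j <;> simp [mapp, kron, Matrix.one_apply]

lemma inner_mapp_kron {σ : Matrix (Fin 2) (Fin 2) ℂ} (hσ : σ.IsHermitian) {T : H →L[ℂ] H}
    (hT : (T : H →ₗ[ℂ] H).IsSymmetric) (u v : PiLp 2 fun _ : Fin 2 => H) :
    inner ℂ (mapp (kron σ T) u) v = inner ℂ u (mapp (kron σ T) v) := by
  simp only [mapp, kron, Matrix.of_apply, PiLp.inner_apply,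
    FunLike.coe_smul, Pi.smul_apply, inner_sum, sum_inner, inner_smul_left, inner_smul_right]
  rw [Finset.sum_comm]
  refine Finset.sum_congr rfl fun j _ => Finset.sum_congr rfl fun k _ => ?_
  rw [show (starRingEnd ℂ) (σ k j) = σ j k from hσ.apply j k, hT.apply_clm]

lemma mapp_kron_pauliDot (u : Fin 3 → ℝ) (v : PiLp 2 fun _ : Fin 2 => H) :
    mapp (kron (pauliDot u) 1) v = ∑ i, (u i : ℂ) • mapp (kron (pauli i) 1) v := by
  simp only [pauliDot, kron_sum_left, kron_smul_left, mapp_sum, mapp_smul]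

lemma inner_mapp_kron_pauliDot_add (u v : Fin 3 → ℝ) (ψ : PiLp 2 fun _ : Fin 2 => H) :
    inner ℂ (mapp (kron (pauliDot u) 1) ψ) (mapp (kron (pauliDot v) 1) ψ)
        + inner ℂ (mapp (kron (pauliDot v) 1) ψ) (mapp (kron (pauliDot u) 1) ψ)
      = ((2 * ∑ i, u i * v i : ℝ) : ℂ) * inner ℂ ψ ψ := by
  have hσ (w : Fin 3 → ℝ) :=
    inner_mapp_kron (T := (1 : H →L[ℂ] H)) (pauliDot_isHermitian w) fun _ _ => rfl
  rw [hσ, hσ, ← mapp_mul, ← mapp_mul, kron_mul_kron, kron_mul_kron, ← inner_add_right,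
    ← mapp_add, ← kron_add_left, pauliDot_mul_add_mul, kron_smul_left, mapp_smul, mul_one,
    mapp_kron_one_one, inner_smul_right]

def dirac (X : Fin 3 → H →L[ℂ] H) (x : Fin 3 → ℝ) : Matrix (Fin 2) (Fin 2) (H →L[ℂ] H) :=
  ∑ i, kron (pauli i) (X i - (x i : ℂ) • 1)

lemma inner_mapp_dirac {X : Fin 3 → H →L[ℂ] H} (hX : ∀ i, (X i : H →ₗ[ℂ] H).IsSymmetric)
    (x : Fin 3 → ℝ) (u v : PiLp 2 fun _ : Fin 2 => H) :
    inner ℂ (mapp (dirac X x) u) v = inner ℂ u (mapp (dirac X x) v) := by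
  simp only [dirac, mapp_sum, sum_inner, inner_sum]
  refine Finset.sum_congr rfl fun i _ => inner_mapp_kron (pauli_isHermitian i) ?_ u v
  exact (hX i).sub (LinearMap.IsSymmetric.smul (Complex.conj_ofReal _) fun _ _ => rfl)

lemma mapp_dirac (X : Fin 3 → H →L[ℂ] H) (x y : Fin 3 → ℝ) (v : PiLp 2 fun _ : Fin 2 => H) :
    mapp (dirac X y) v
      = mapp (dirac X x) v + ∑ i, ((x i - y i : ℝ) : ℂ) • mapp (kron (pauli i) 1) v := by
  simp only [dirac, mapp_sum, ← mapp_smul, ← Finset.sum_add_distrib, ← mapp_add]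
  refine Finset.sum_congr rfl fun i _ => congrArg (mapp · v) ?_
  ext1 j k
  simp only [kron, Matrix.add_apply, Matrix.smul_apply, Matrix.of_apply]
  push_cast
  module

def mappCLM (M : Matrix (Fin 2) (Fin 2) (H →L[ℂ] H)) :
    (PiLp 2 fun _ : Fin 2 => H) →L[ℂ] PiLp 2 fun _ : Fin 2 => H :=
  (PiLp.continuousLinearEquiv 2 ℂ fun _ : Fin 2 => H).symm.toContinuousLinearMap ∘L
    ContinuousLinearMap.pi fun j => ∑ k, M j k ∘L PiLp.proj (𝕜 := ℂ) 2 (fun _ : Fin 2 => H) k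

lemma HasDerivAt.mapp (M : Matrix (Fin 2) (Fin 2) (H →L[ℂ] H))
    {ψ : ℝ → PiLp 2 fun _ : Fin 2 => H} {dψ : PiLp 2 fun _ : Fin 2 => H} {t : ℝ}
    (hψ : HasDerivAt ψ dψ t) :
    HasDerivAt (fun t => _root_.mapp M (ψ t)) (_root_.mapp M dψ) t :=
  ((mappCLM M).restrictScalars ℝ).hasFDerivAt.comp_hasDerivAt t hψ

open Filter Topology in
lemma mapp_dirac_deriv_of_eventually_kernel (X : Fin 3 → H →L[ℂ] H) {y : ℝ → Fin 3 → ℝ}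
    {dy : Fin 3 → ℝ} {ψ : ℝ → PiLp 2 fun _ : Fin 2 => H} {dψ : PiLp 2 fun _ : Fin 2 => H}
    {t₀ : ℝ} (hy : ∀ i, HasDerivAt (fun t => y t i) (dy i) t₀) (hψ : HasDerivAt ψ dψ t₀)
    (hker : ∀ᶠ t in 𝓝 t₀, mapp (dirac X (y t)) (ψ t) = 0) :
    mapp (dirac X (y t₀)) dψ = mapp (kron (pauliDot dy) 1) (ψ t₀) := by
  have hcoef (i : Fin 3) :
      HasDerivAt (fun t => ((y t₀ i - y t i : ℝ) : ℂ)) (-(dy i : ℂ)) t₀ := by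
    simpa using ((hasDerivAt_const t₀ (y t₀ i)).sub (hy i)).ofReal_comp
  have hderiv : HasDerivAt (fun t => mapp (dirac X (y t)) (ψ t))
      (mapp (dirac X (y t₀)) dψ - mapp (kron (pauliDot dy) 1) (ψ t₀)) t₀ := by
    rw [funext fun t => mapp_dirac X (y t₀) (y t) (ψ t)]
    refine ((hψ.mapp (dirac X (y t₀))).add (HasDerivAt.fun_sum (u := Finset.univ) fun i _ =>
      (hcoef i).smul (hψ.mapp (kron (pauli i) 1)))).congr_deriv ?_
    simp [mapp_kron_pauliDot, sub_eq_add_neg, ← Finset.sum_neg_distrib]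
  have hzero : HasDerivAt (fun t => mapp (dirac X (y t)) (ψ t)) 0 t₀ :=
    (hasDerivAt_const t₀ 0).congr_of_eventuallyEq hker
  exact sub_eq_zero.mp (hderiv.unique hzero)

end BlockOperators

variable {H : Type*} [NormedAddCommGroup H] [InnerProductSpace ℂ H] [CompleteSpace H]

/-- For a two-parameter differentiable family s ↦ x(s) ∈ M_Λ with unit
kernel vectors Λ(x(s)) of D_x = Σᵢ σᵢ ⊗ (Xⁱ − xⁱ), the symmetrization
(1/2)(⟨∂ₐΛ, D² ∂_bΛ⟩ + ⟨∂_bΛ, D² ∂ₐΛ⟩) equals the induced Euclidean metric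
γ_{ab} = Σᵢ (∂ₐxⁱ)(∂_bxⁱ). -/
theorem stmt10 (X : Fin 3 → H →L[ℂ] H) (hX : ∀ i, IsSelfAdjoint (X i))
    (x : (Fin 2 → ℝ) → Fin 3 → ℝ) (Λ : (Fin 2 → ℝ) → PiLp 2 fun _ : Fin 2 => H)
    (s₀ : Fin 2 → ℝ) (dx : Fin 2 → Fin 3 → ℝ) (dΛ : Fin 2 → PiLp 2 fun _ : Fin 2 => H)
    (hx : ∀ a i, HasDerivAt (fun t : ℝ => x (s₀ + t • (Pi.single a 1 : Fin 2 → ℝ)) i) (dx a i) 0)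
    (hΛ : ∀ a, HasDerivAt (fun t : ℝ => Λ (s₀ + t • (Pi.single a 1 : Fin 2 → ℝ))) (dΛ a) 0)
    (hnorm : ∀ s, ‖Λ s‖ = 1)
    (hker : ∀ s, mapp (∑ i, kron (pauli i) (X i - (x s i : ℂ) • 1)) (Λ s) = 0) :
    ∀ a b : Fin 2,
      let D : Matrix (Fin 2) (Fin 2) (H →L[ℂ] H) :=
        ∑ i, kron (pauli i) (X i - (x s₀ i : ℂ) • 1)
      (1 / 2 : ℂ) * ((inner ℂ (dΛ a) (mapp (D * D) (dΛ b)) : ℂ)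
          + (inner ℂ (dΛ b) (mapp (D * D) (dΛ a)) : ℂ))
        = ∑ i, ((dx a i : ℝ) : ℂ) * ((dx b i : ℝ) : ℂ) := by
  intro a b D
  rw [show D = dirac X (x s₀) from rfl]
  have hXsym (i : Fin 3) := (hX i).isSymmetric
  have hDΛ (e : Fin 2) :
      mapp (dirac X (x s₀)) (dΛ e) = mapp (kron (pauliDot (dx e)) 1) (Λ s₀) := by
    simpa using mapp_dirac_deriv_of_eventually_kernel X (hx e) (hΛ e) (.of_forall fun _ => hker _)
  have hΛ₀ : inner ℂ (Λ s₀) (Λ s₀) = (1 : ℂ) := by simp [hnorm]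
  rw [mapp_mul, mapp_mul, ← inner_mapp_dirac hXsym _ (dΛ a), ← inner_mapp_dirac hXsym _ (dΛ b),
    hDΛ, hDΛ, inner_mapp_kron_pauliDot_add, hΛ₀]
  push_cast
  ring
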